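/- Let R = F_4[[u_1]][u, u^{-1}] be the graded ring with u_1 in degree 0 and u a unit in degree −2, and let a generator ω of a cyclic group C_3 act F_4-linearly on R by ring homomorphisms via ω(u_1) = ζ u_1 and ω(u) = ζ u, where ζ ∈ F_4 is a primitive third root of unity. Then the fixed subring R^{C_3} equals F_4[[u_1^3]][v_1, v_2, v_2^{-1}]/(v_1^3 = v_2 u_1^3), where v_1 = u_1 u^{-1} and v_2 = u^{-3}; concretely the monomials u_1^a u^b fixed by ω are exactly those with a + b ≡ 0 mod 3. -/

import Mathlib

/-! `ω` multiplies both `u₁` and `u` by `ζ`, hence scales the monomial `u₁^a u^b` by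
`ζ^(a+b)`. In characteristic `2` the relation `ζ² + ζ + 1 = 0` makes `ζ` a root of the third
cyclotomic polynomial, i.e. a primitive cube root of unity, so `ζ^(a+b) = 1` exactly when
`3 ∣ a + b`. -/

open LaurentPolynomial

theorem isPrimitiveRoot_three_of_sq_add_add_one {R : Type*} [CommRing R] [IsDomain R]
    [NeZero (3 : R)] {ζ : R} (h : ζ ^ 2 + ζ + 1 = 0) : IsPrimitiveRoot ζ 3 :=
  Polynomial.isRoot_cyclotomic_iff.mp (by simp [Polynomial.cyclotomic_three, h])

namespace LaurentPolynomial

theorem C_mul_T_ne_zero {R : Type*} [Semiring R] {r : R} (hr : r ≠ 0) (n : ℤ) :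
    C r * T n ≠ 0 := by
  rwa [← single_eq_C_mul_T, Ne, AddMonoidAlgebra.single_eq_zero]

variable {K R F : Type*} [Field K] [CommSemiring R] [Algebra K R]
  [FunLike F R[T;T⁻¹] R[T;T⁻¹]] [MonoidHomClass F R[T;T⁻¹] R[T;T⁻¹]]

theorem map_T_of_map_T_one (ω : F) {ζ : K} (hζ : ζ ≠ 0)
    (h : ω (T 1) = algebraMap K R[T;T⁻¹] ζ * T 1) (n : ℤ) :
    ω (T n) = algebraMap K R[T;T⁻¹] (ζ ^ n) * T n := by
  induction n using Int.induction_on with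
  | zero => simp [T_zero]
  | succ n ih =>
    rw [T_add, map_mul, ih, h, zpow_add_one₀ hζ, map_mul]
    ring
  | pred n ih =>
    have hunit : IsUnit (ω (T 1)) := (isUnit_T 1).map ω
    rw [← hunit.mul_left_inj, ← map_mul, ← T_add, sub_add_cancel, ih, h, mul_mul_mul_comm,
      ← map_mul, ← T_add, ← zpow_add_one₀ hζ, sub_add_cancel]

theorem map_C_pow_mul_T (ω : F) {ζ : K} (hζ : ζ ≠ 0) {r : R}
    (hr : ω (C r) = algebraMap K R[T;T⁻¹] ζ * C r)
    (hT : ω (T 1) = algebraMap K R[T;T⁻¹] ζ * T 1) (a : ℕ) (b : ℤ) :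
    ω (C (r ^ a) * T b) = algebraMap K R[T;T⁻¹] (ζ ^ ((a : ℤ) + b)) * (C (r ^ a) * T b) := by
  rw [map_mul, map_pow, map_pow, hr, map_T_of_map_T_one ω hζ hT, zpow_add₀ hζ, zpow_natCast,
    map_mul, map_pow]
  ring

end LaurentPolynomial

theorem algebraMap_mul_eq_self_iff {K A : Type*} [Field K] [Ring A] [Algebra K A] {m : A}
    (hm : m ≠ 0) {c : K} : algebraMap K A c * m = m ↔ c = 1 := by
  rw [← Algebra.smul_def, ← smul_left_injective K hm |>.eq_iff, one_smul]

theorem stmt_9_general (ζ : GaloisField 2 2) (hζ : ζ ^ 2 + ζ + 1 = 0)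
    (ω : LaurentPolynomial (PowerSeries (GaloisField 2 2)) →ₐ[GaloisField 2 2]
         LaurentPolynomial (PowerSeries (GaloisField 2 2)))
    (hu1 : ω (LaurentPolynomial.C PowerSeries.X)
         = LaurentPolynomial.C (PowerSeries.C ζ * PowerSeries.X))
    (hu : ω (LaurentPolynomial.T 1)
        = LaurentPolynomial.C (PowerSeries.C ζ)
            * LaurentPolynomial.T 1) :
    ∀ (a : ℕ) (b : ℤ),
      ω (LaurentPolynomial.C (PowerSeries.X ^ a) * LaurentPolynomial.T b)
          = LaurentPolynomial.C (PowerSeries.X ^ a) * LaurentPolynomial.T b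
        ↔ ((a : ℤ) + b) % 3 = 0 := by
  intro a b
  have h3 : (3 : GaloisField 2 2) = 1 := by
    linear_combination CharTwo.two_eq_zero (R := GaloisField 2 2)
  have : NeZero (3 : GaloisField 2 2) := ⟨h3 ▸ one_ne_zero⟩
  have hζ3 := isPrimitiveRoot_three_of_sq_add_add_one hζ
  rw [map_mul] at hu1
  rw [map_C_pow_mul_T ω (hζ3.ne_zero three_ne_zero) hu1 hu,
    algebraMap_mul_eq_self_iff (C_mul_T_ne_zero (pow_ne_zero a PowerSeries.X_ne_zero) b),
    hζ3.zpow_eq_one_iff_dvd, Int.dvd_iff_emod_eq_zero, Nat.cast_ofNat]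

/-- Let `R = F₄[[u₁]][u^{±1}]`, realized as Laurent polynomials in `u`
over `F₄[[u₁]]` (so `u₁ = C X` and `u = T 1`), and let a generator `ω` of `C₃` act by
the `F₄`-algebra map `ω(u₁) = ζu₁`, `ω(u) = ζu` for `ζ` a primitive cube root of unity.
Then a monomial `u₁^a u^b` is fixed by `ω` exactly when `a + b ≡ 0 mod 3` (which is the
concrete description of the fixed subring `F₄[[u₁³]][v₁, v₂^{±1}]/(v₁³ = v₂u₁³)`). -/
theorem stmt_9 (ζ : GaloisField 2 2) (hζ : ζ ^ 2 + ζ + 1 = 0)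
    (ω : LaurentPolynomial (PowerSeries (GaloisField 2 2)) →ₐ[GaloisField 2 2]
         LaurentPolynomial (PowerSeries (GaloisField 2 2)))
    (hω3 : ∀ x, ω (ω (ω x)) = x)
    (hu1 : ω (LaurentPolynomial.C PowerSeries.X)
         = LaurentPolynomial.C (PowerSeries.C ζ * PowerSeries.X))
    (hu : ω (LaurentPolynomial.T 1)
        = LaurentPolynomial.C (PowerSeries.C ζ)
            * LaurentPolynomial.T 1) :
    ∀ (a : ℕ) (b : ℤ),
      ω (LaurentPolynomial.C (PowerSeries.X ^ a) * LaurentPolynomial.T b)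
          = LaurentPolynomial.C (PowerSeries.X ^ a) * LaurentPolynomial.T b
        ↔ ((a : ℤ) + b) % 3 = 0 :=
  stmt_9_general ζ hζ ω hu1 hu
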